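/- If C is a clustering of the node set of a finite graph G produced by the clustering algorithm Cluster, then no cluster contains a node of normalised degree greater than 2 relative to that cluster: for every cluster index i and every node n ∈ C(i), NDeg(C(i), n) ≤ 2. -/

import Mathlib

/-!
Formalisation of the clustering algorithm `Cluster` from
"Optimisation by Pre-Compilation".

A graph is given by a vertex type `V` with a symmetric adjacency
relation `Adj`.  `Deg N n` is the degree of `n` within the node set `N`,
`NDeg N n` the normalised degree.  An execution of the (nondeterministic)
clustering algorithm is modelled by the inductive predicates
`Propagates` (the propagation phase growing one cluster) and
`ClusterExec` (the driver, producing the list of clusters).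
-/

namespace P2P

variable {V : Type*}

/-- The degree of node `n` within the set of nodes `N`:
the number of nodes in `N \ {n}` adjacent to `n`. -/
noncomputable def Deg (Adj : V → V → Prop) (N : Set V) (n : V) : ℕ :=
  {m ∈ N | m ≠ n ∧ Adj m n}.ncard

/-- The normalised degree of node `n` within the set of nodes `N`:
the number of nodes in `N \ {n}` adjacent to `n` whose degree exceeds `1`. -/
noncomputable def NDeg (Adj : V → V → Prop) (N : Set V) (n : V) : ℕ :=
  {m ∈ N | m ≠ n ∧ Adj m n ∧ 1 < Deg Adj N m}.ncard

/-- The extension set `I` of the propagation phase: the unclustered nodes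
(of `U`) adjacent to some node `n'` of the current cluster `C` with
`NDeg (U ∪ C) n' ≤ 2`, together with the unclustered nodes adjacent to some
node `n'` of `C` with `Deg (U ∪ C) n' = 1`. -/
def extSet (Adj : V → V → Prop) (U C : Set V) : Set V :=
  {n ∈ U | ∃ n' ∈ C, Adj n n' ∧
      (NDeg Adj (U ∪ C) n' ≤ 2 ∨ Deg Adj (U ∪ C) n' = 1)}

/-- `Propagates Adj U C C'` : starting from the set `U` of unclustered nodes
and current cluster `C`, repeatedly adding the extension set (and removing it
from the unclustered nodes) terminates with final cluster `C'`. -/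
inductive Propagates (Adj : V → V → Prop) : Set V → Set V → Set V → Prop
  | done (U C : Set V) : extSet Adj U C = ∅ → Propagates Adj U C C
  | step (U C C' : Set V) : extSet Adj U C ≠ ∅ →
      Propagates Adj (U \ extSet Adj U C) (C ∪ extSet Adj U C) C' →
      Propagates Adj U C C'

/-- `ClusterExec Adj U Cs` : one possible execution of the clustering
algorithm on the set `U` of (still unclustered) nodes, producing the list of
clusters `Cs`.  While unclustered nodes remain, a node `n` of minimal
normalised degree among the unclustered nodes is chosen, the new cluster is
started as `{n}` and grown by propagation; its nodes are removed from the
unclustered set. -/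
inductive ClusterExec (Adj : V → V → Prop) : Set V → List (Set V) → Prop
  | nil : ClusterExec Adj ∅ []
  | cons {U : Set V} {n : V} {C : Set V} {rest : List (Set V)} :
      n ∈ U →
      (∀ m ∈ U, NDeg Adj U n ≤ NDeg Adj U m) →
      Propagates Adj (U \ {n}) {n} C →
      ClusterExec Adj (U \ C) rest →
      ClusterExec Adj U (C :: rest)

/-- A graph is connected if any two nodes are joined by a chain of
adjacent nodes. -/
def Conn (Adj : V → V → Prop) : Prop :=
  ∀ a b : V, Relation.ReflTransGen Adj a b

end P2P

/-!
Propagation grows a cluster as a tree rooted at its seed `s`: every other node joined as a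
neighbour of an earlier node, its parent, which was a propagator, i.e. had normalised degree
at most `2` or degree `1` in the set `W` of nodes that were unclustered when the cluster was
started. Call a node heavy if its degree in `W` exceeds `1`. A propagator clearly has
normalised degree at most `2` inside the cluster, so let `n` be a node that is not one.

Count the pairs `(p, m)` where `p` is a hub (the seed, or a heavy propagator of the
cluster other than the seed, a relay) and `m` is a heavy neighbour of `p`: there are at
most `NDeg W s + 2 · #relays` of them. Every heavy neighbour `m` of `n` in the cluster
gives the pair `(m, n)` or `(par m, m)`, pointing at a non-propagator; every relay `q`
gives `(par q, q)`, and also `(q, par q)` when its parent is heavy, both pointing at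
propagators. These pairs are distinct, and only children of a light seed have a light
parent, so at most two heavy neighbours of `n` remain.
-/

namespace P2P

variable {V : Type*} (Adj : V → V → Prop)

def IsPropagator (W : Set V) (p : V) : Prop :=
  NDeg Adj W p ≤ 2 ∨ Deg Adj W p = 1

section Degrees

variable [Finite V]

theorem deg_mono {N N' : Set V} (h : N ⊆ N') (n : V) : Deg Adj N n ≤ Deg Adj N' n :=
  Set.ncard_le_ncard (fun _ hm => ⟨h hm.1, hm.2⟩)

theorem ndeg_mono {N N' : Set V} (h : N ⊆ N') (n : V) : NDeg Adj N n ≤ NDeg Adj N' n :=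
  Set.ncard_le_ncard fun m hm =>
    ⟨h hm.1, hm.2.1, hm.2.2.1, hm.2.2.2.trans_le (deg_mono Adj h m)⟩

theorem ndeg_le_deg (N : Set V) (n : V) : NDeg Adj N n ≤ Deg Adj N n :=
  Set.ncard_le_ncard fun _ hm => ⟨hm.1, hm.2.1, hm.2.2.1⟩

theorem ndeg_le_two_of_isPropagator {C W : Set V} (hCW : C ⊆ W) {n : V}
    (hn : IsPropagator Adj W n) : NDeg Adj C n ≤ 2 := by
  have := ndeg_mono Adj hCW n
  have := ndeg_le_deg Adj W n
  rcases hn with h | h <;> omega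

theorem one_lt_deg_of_not_isPropagator {W : Set V} {n : V} (hn : ¬ IsPropagator Adj W n) :
    1 < Deg Adj W n := by
  have := ndeg_le_deg Adj W n
  unfold IsPropagator at hn
  omega

end Degrees

theorem ndeg_le_two_of_isPropagator_of_one_lt_deg {W : Set V} {p : V}
    (hp : IsPropagator Adj W p) (hheavy : 1 < Deg Adj W p) : NDeg Adj W p ≤ 2 := by
  rcases hp with h | h <;> omega

theorem ndeg_eq_zero_of_subsingleton {C : Set V} (hC : C.Subsingleton) {n : V} (hn : n ∈ C) :
    NDeg Adj C n = 0 := by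
  unfold NDeg
  convert Set.ncard_empty V using 2
  exact Set.eq_empty_of_forall_notMem fun m hm => hm.2.1 (hC hm.1 hn)

theorem extSet_subset (U C : Set V) : extSet Adj U C ⊆ U := fun _ hx => hx.1

theorem diff_extSet_union (U C : Set V) :
    U \ extSet Adj U C ∪ (C ∪ extSet Adj U C) = U ∪ C := by
  rw [← Set.union_assoc, Set.union_right_comm, Set.sdiff_union_of_subset (extSet_subset Adj U C)]

namespace Propagates

variable {Adj}

theorem start_subset {U C C' : Set V} (h : Propagates Adj U C C') : C ⊆ C' := by
  induction h with
  | done => rfl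
  | step _ _ _ _ _ ih => exact Set.subset_union_left.trans ih

theorem subset_union {U C C' : Set V} (h : Propagates Adj U C C') : C' ⊆ U ∪ C := by
  induction h with
  | done => exact Set.subset_union_right
  | step U C _ _ _ ih => rwa [diff_extSet_union] at ih

theorem exists_rank {U C C' : Set V} (h : Propagates Adj U C C') :
    ∃ r : V → ℕ, ∀ x ∈ C', x ∉ C →
      ∃ p ∈ C', IsPropagator Adj (U ∪ C) p ∧ Adj x p ∧ r p < r x := by
  classical
  induction h with
  | done => exact ⟨0, fun x hx hxC => absurd hx hxC⟩
  | step U C C' _ hp ih =>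
    obtain ⟨r, hr⟩ := ih
    rw [diff_extSet_union] at hr
    refine ⟨fun x => if x ∈ C then 0 else r x + 1, fun x hx hxC => ?_⟩
    by_cases hxI : x ∈ extSet Adj U C
    · obtain ⟨-, p, hpC, hadj, hprop⟩ := hxI
      exact ⟨p, hp.start_subset (Or.inl hpC), hprop, hadj, by simp [hpC, hxC]⟩
    · obtain ⟨p, hpC', hprop, hadj, hlt⟩ := hr x hx (by simp [hxC, hxI])
      refine ⟨p, hpC', hprop, hadj, ?_⟩
      simp only [hxC, if_false]
      split_ifs <;> omega

end Propagates

structure PropagationTree (W C : Set V) (s : V) where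
  par : V → V
  rank : V → ℕ
  subset : C ⊆ W
  root_mem : s ∈ C
  par_mem : ∀ x ∈ C, x ≠ s → par x ∈ C
  isPropagator_par : ∀ x ∈ C, x ≠ s → IsPropagator Adj W (par x)
  adj_par : ∀ x ∈ C, x ≠ s → Adj x (par x)
  rank_par_lt : ∀ x ∈ C, x ≠ s → rank (par x) < rank x

variable {Adj} in
theorem Propagates.nonempty_propagationTree {U C : Set V} {s : V} (hs : s ∈ U)
    (h : Propagates Adj (U \ {s}) {s} C) : Nonempty (PropagationTree Adj U C s) := by
  have hU : U \ {s} ∪ {s} = U := Set.sdiff_union_of_subset (Set.singleton_subset_iff.2 hs)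
  obtain ⟨r, hr⟩ := h.exists_rank
  simp only [hU, Set.mem_singleton_iff] at hr
  choose! par hpar_mem hprop hadj hlt using hr
  exact ⟨⟨par, r, hU ▸ h.subset_union, h.start_subset rfl, hpar_mem, hprop, hadj, hlt⟩⟩

namespace PropagationTree

variable {Adj} {W C : Set V} {s : V} (T : PropagationTree Adj W C s)

theorem par_ne {x : V} (hx : x ∈ C) (hxs : x ≠ s) : T.par x ≠ x := fun h =>
  (T.rank_par_lt x hx hxs).ne (congrArg T.rank h)

theorem par_par_ne {x : V} (hx : x ∈ C) (hxs : x ≠ s) (hps : T.par x ≠ s) :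
    T.par (T.par x) ≠ x := fun h => by
  have := T.rank_par_lt x hx hxs
  have := T.rank_par_lt _ (T.par_mem x hx hxs) hps
  rw [h] at this
  omega

theorem isPropagator_root (T : PropagationTree Adj W C s) (hC : C.Nontrivial) :
    IsPropagator Adj W s := by
  obtain ⟨x, hx, hxs⟩ := hC.exists_ne s
  obtain ⟨p, ⟨hpC, hp⟩, hmin⟩ :=
    (measure T.rank).wf.has_min {p | p ∈ C ∧ IsPropagator Adj W p}
      ⟨T.par x, T.par_mem x hx hxs, T.isPropagator_par x hx hxs⟩
  by_contra hs
  have hps : p ≠ s := fun h => hs (h ▸ hp)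
  exact hmin _ ⟨T.par_mem p hpC hps, T.isPropagator_par p hpC hps⟩ (T.rank_par_lt p hpC hps)

/-- A non-root parent is adjacent both to its child and to its own parent. -/
theorem one_lt_deg_par [Finite V] [Std.Symm Adj] {x : V} (hx : x ∈ C) (hxs : x ≠ s)
    (hps : T.par x ≠ s) : 1 < Deg Adj W (T.par x) := by
  have hp := T.par_mem x hx hxs
  refine (Set.one_lt_ncard_iff).2 ⟨x, T.par (T.par x), ⟨T.subset hx, ?_, T.adj_par x hx hxs⟩,
    ⟨T.subset (T.par_mem _ hp hps), (T.par_ne hp hps), symm_of Adj (T.adj_par _ hp hps)⟩,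
    (T.par_par_ne hx hxs hps).symm⟩
  exact (T.par_ne hx hxs).symm

theorem par_eq_root_of_not_one_lt_deg [Finite V] [Std.Symm Adj] {x : V} (hx : x ∈ C)
    (hxs : x ≠ s) (hlight : ¬ 1 < Deg Adj W (T.par x)) : T.par x = s := by
  by_contra hps
  exact hlight (T.one_lt_deg_par hx hxs hps)

end PropagationTree

section Counting

open Finset
open scoped Classical

variable [Fintype V]

noncomputable def heavyNbrs (W : Set V) (p : V) : Finset V :=
  {m | m ∈ W ∧ m ≠ p ∧ Adj m p ∧ 1 < Deg Adj W m}

theorem card_heavyNbrs (W : Set V) (p : V) : #(heavyNbrs Adj W p) = NDeg Adj W p := by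
  rw [NDeg, ← Set.ncard_coe_finset]
  congr
  ext
  simp [heavyNbrs]

theorem ndeg_le_card_heavyNbrs_filter {C W : Set V} (hCW : C ⊆ W) (n : V) :
    NDeg Adj C n ≤ #((heavyNbrs Adj W n).filter (· ∈ C)) := by
  rw [NDeg, ← Set.ncard_coe_finset]
  refine Set.ncard_le_ncard fun m hm => ?_
  simp only [coe_filter, heavyNbrs, mem_filter, mem_univ, true_and]
  exact ⟨⟨hCW hm.1, hm.2.1, hm.2.2.1, hm.2.2.2.trans_le (deg_mono Adj hCW m)⟩, hm.1⟩

noncomputable def relays (W C : Set V) (s : V) : Finset V :=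
  {p | p ∈ C ∧ p ≠ s ∧ IsPropagator Adj W p ∧ 1 < Deg Adj W p}

noncomputable def hubs (W C : Set V) (s : V) : Finset V :=
  insert s (relays Adj W C s)

noncomputable def hubEdges (W C : Set V) (s : V) : Finset ((_ : V) × V) :=
  (hubs Adj W C s).sigma (heavyNbrs Adj W)

theorem card_hubEdges_le (W C : Set V) (s : V) :
    #(hubEdges Adj W C s) ≤ NDeg Adj W s + 2 * #(relays Adj W C s) := by
  have hs : s ∉ relays Adj W C s := by simp [relays]
  rw [hubEdges, hubs, card_sigma, sum_insert hs, card_heavyNbrs, mul_comm, ← smul_eq_mul,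
    ← sum_const]
  gcongr with q hq
  simp only [relays, mem_filter, mem_univ, true_and] at hq
  rw [card_heavyNbrs]
  exact ndeg_le_two_of_isPropagator_of_one_lt_deg Adj hq.2.2.1 hq.2.2.2

theorem mem_hubs {W C : Set V} {s p : V} (hp : p ∈ C) (hprop : IsPropagator Adj W p)
    (hheavy : 1 < Deg Adj W p) : p ∈ hubs Adj W C s := by
  by_cases hps : p = s
  · exact hps ▸ mem_insert_self p _
  · exact mem_insert_of_mem (by simp [relays, hp, hps, hprop, hheavy])

namespace PropagationTree

variable {Adj} {W C : Set V} {s : V} (T : PropagationTree Adj W C s) [Std.Symm Adj]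

theorem par_mem_hubs {x : V} (hx : x ∈ C) (hxs : x ≠ s) :
    T.par x ∈ hubs Adj W C s := by
  by_cases hps : T.par x = s
  · rw [hps]
    exact mem_insert_self s _
  · exact mem_hubs Adj (T.par_mem x hx hxs) (T.isPropagator_par x hx hxs)
      (T.one_lt_deg_par hx hxs hps)

theorem card_heavyNbrs_filter_le (T : PropagationTree Adj W C s) (hs : IsPropagator Adj W s)
    {n : V} (hn : n ∈ C) (hnp : ¬ IsPropagator Adj W n) :
    #((heavyNbrs Adj W n).filter (· ∈ C)) ≤
      #((hubEdges Adj W C s).filter fun e => ¬ IsPropagator Adj W e.2) := by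
  refine card_le_card_of_injOn
    (fun m => if IsPropagator Adj W m then ⟨m, n⟩ else ⟨T.par m, m⟩) (fun m hm => ?_) ?_
  · simp only [heavyNbrs, coe_filter, mem_filter, mem_univ, true_and, Set.mem_ofPred_eq] at hm
    obtain ⟨⟨-, hmn, hadj, hheavy⟩, hmC⟩ := hm
    simp only [coe_filter, hubEdges, Set.mem_ofPred_eq, mem_sigma]
    split_ifs with hmp
    · refine ⟨⟨mem_hubs Adj hmC hmp hheavy, ?_⟩, hnp⟩
      simp [heavyNbrs, T.subset hn, hmn.symm, symm_of Adj hadj,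
        one_lt_deg_of_not_isPropagator Adj hnp]
    · have hms : m ≠ s := fun h => hmp (h ▸ hs)
      refine ⟨⟨T.par_mem_hubs hmC hms, ?_⟩, hmp⟩
      simp [heavyNbrs, T.subset hmC, (T.par_ne hmC hms).symm, T.adj_par m hmC hms, hheavy]
  · intro a ha b hb hab
    simp only [heavyNbrs, coe_filter, mem_filter, mem_univ, true_and, Set.mem_ofPred_eq] at ha hb
    dsimp only at hab
    split_ifs at hab <;> simp_all

theorem card_relays_add_card_filter_le :
    #(relays Adj W C s) + #((relays Adj W C s).filter fun q => 1 < Deg Adj W (T.par q)) ≤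
      #((hubEdges Adj W C s).filter fun e => IsPropagator Adj W e.2) := by
  rw [← card_disjSum]
  refine card_le_card_of_injOn (Sum.elim (fun q => ⟨T.par q, q⟩) (fun q => ⟨q, T.par q⟩))
    (fun z hz => ?_) ?_
  · simp only [coe_filter, hubEdges, Set.mem_ofPred_eq, mem_sigma, heavyNbrs, mem_filter,
      mem_univ, true_and]
    rcases z with q | q <;>
      simp only [mem_coe, inl_mem_disjSum, inr_mem_disjSum, relays, mem_filter, mem_univ,
        true_and, Sum.elim_inl, Sum.elim_inr] at hz ⊢
    · obtain ⟨hqC, hqs, hqp, hqh⟩ := hz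
      exact ⟨⟨T.par_mem_hubs hqC hqs, T.subset hqC, (T.par_ne hqC hqs).symm,
        T.adj_par q hqC hqs, hqh⟩, hqp⟩
    · obtain ⟨⟨hqC, hqs, hqp, hqh⟩, hph⟩ := hz
      exact ⟨⟨mem_hubs Adj hqC hqp hqh, T.subset (T.par_mem q hqC hqs), T.par_ne hqC hqs,
        symm_of Adj (T.adj_par q hqC hqs), hph⟩, T.isPropagator_par q hqC hqs⟩
  · rintro (a | a) ha (b | b) hb hab <;>
      simp only [mem_coe, inl_mem_disjSum, inr_mem_disjSum, relays, mem_filter, mem_univ,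
        true_and, Sum.elim_inl, Sum.elim_inr, Sigma.mk.inj_iff, heq_eq_eq, Sum.inl.injEq,
        Sum.inr.injEq, reduceCtorEq] at ha hb hab ⊢
    · exact hab.2
    · exact T.par_par_ne ha.1 ha.2.1 (hab.1 ▸ hb.1.2.1) (by rw [hab.1, ← hab.2])
    · exact T.par_par_ne hb.1 hb.2.1 (hab.1 ▸ ha.1.2.1) (by rw [← hab.1, hab.2])
    · exact hab.1

theorem ndeg_root_add_card_filter_le_two (hs : IsPropagator Adj W s) :
    NDeg Adj W s + #((relays Adj W C s).filter fun q => ¬ 1 < Deg Adj W (T.par q)) ≤ 2 := by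
  have hchild : ∀ q ∈ (relays Adj W C s).filter fun q => ¬ 1 < Deg Adj W (T.par q),
      q ∈ W ∧ q ≠ s ∧ Adj q s ∧ ¬ 1 < Deg Adj W s := by
    intro q hq
    simp only [relays, mem_filter, mem_univ, true_and] at hq
    obtain ⟨⟨hqC, hqs, -, -⟩, hlight⟩ := hq
    have hps := T.par_eq_root_of_not_one_lt_deg hqC hqs hlight
    exact ⟨T.subset hqC, hqs, hps ▸ T.adj_par q hqC hqs, hps ▸ hlight⟩
  by_cases hheavy : 1 < Deg Adj W s
  · rw [filter_eq_empty_iff.2 fun q hq hlight =>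
      (hchild q (mem_filter.2 ⟨hq, hlight⟩)).2.2.2 hheavy, card_empty]
    exact ndeg_le_two_of_isPropagator_of_one_lt_deg Adj hs hheavy
  · have hcard :
        #((relays Adj W C s).filter fun q => ¬ 1 < Deg Adj W (T.par q)) ≤ Deg Adj W s := by
      rw [Deg, ← Set.ncard_coe_finset]
      exact Set.ncard_le_ncard fun q hq => (hchild q hq).imp_right fun h => ⟨h.1, h.2.1⟩
    have := ndeg_le_deg Adj W s
    omega

theorem card_heavyNbrs_filter_le_two (T : PropagationTree Adj W C s)
    (hs : IsPropagator Adj W s) {n : V} (hn : n ∈ C) (hnp : ¬ IsPropagator Adj W n) :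
    #((heavyNbrs Adj W n).filter (· ∈ C)) ≤ 2 := by
  have hM := T.card_heavyNbrs_filter_le hs hn hnp
  have hQ := T.card_relays_add_card_filter_le
  have hroot := T.ndeg_root_add_card_filter_le_two hs
  have hE := card_hubEdges_le Adj W C s
  have hsplitE := card_filter_add_card_filter_not (s := hubEdges Adj W C s)
    fun e => IsPropagator Adj W e.2
  have hsplitQ := card_filter_add_card_filter_not (s := relays Adj W C s)
    fun q => 1 < Deg Adj W (T.par q)
  omega

theorem ndeg_le_two (T : PropagationTree Adj W C s) {n : V} (hn : n ∈ C) :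
    NDeg Adj C n ≤ 2 := by
  by_cases hnp : IsPropagator Adj W n
  · exact ndeg_le_two_of_isPropagator Adj T.subset hnp
  rcases C.subsingleton_or_nontrivial with hC | hC
  · exact (ndeg_eq_zero_of_subsingleton Adj hC hn).trans_le (Nat.zero_le 2)
  · exact (ndeg_le_card_heavyNbrs_filter Adj T.subset n).trans
      (T.card_heavyNbrs_filter_le_two (T.isPropagator_root hC) hn hnp)

end PropagationTree

theorem ClusterExec.ndeg_le_two [Std.Symm Adj] {U : Set V} {Cs : List (Set V)}
    (h : ClusterExec Adj U Cs) : ∀ C ∈ Cs, ∀ n ∈ C, NDeg Adj C n ≤ 2 := by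
  induction h with
  | nil => simp
  | cons hnU _ hprop _ ih =>
    rintro C (_ | ⟨_, hC⟩)
    · obtain ⟨T⟩ := hprop.nonempty_propagationTree hnU
      exact fun _ => T.ndeg_le_two
    · exact ih C hC

end Counting

end P2P

open P2P in
/-- If `Cs` is a clustering of the node set of a finite
graph produced by (any execution of) the clustering algorithm `Cluster`,
then no cluster contains a node of normalised degree greater than `2`
relative to that cluster. -/
theorem cluster_ndeg_le_two {V : Type*} [Fintype V]
    (Adj : V → V → Prop) (hsymm : Symmetric Adj)
    (Cs : List (Set V)) (hexec : ClusterExec Adj Set.univ Cs) :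
    ∀ C ∈ Cs, ∀ n ∈ C, NDeg Adj C n ≤ 2 := by
  have : Std.Symm Adj := ⟨fun _ _ h => hsymm h⟩
  exact hexec.ndeg_le_two
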